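/- arXiv:1208.2546 — 8 statements merged into one kernel-verified Lean document; each statement's English description precedes it below -/
import Mathlib

section
/- Let Ψ : ℝ⁴ → ℂ⁴ be a Dirac solution for the 4-potential a = (a₀,a₁,a₂,a₃) and mass κ, and also a Dirac solution for the 4-potential b = (b₀,b₁,b₂,b₃) and the same mass κ. Then for every x ∈ ℝ⁴ with Ψ(x) ≠ 0, one has (a₀(x) − b₀(x))² − Σ_{μ=1}^{3} (a_μ(x) − b_μ(x))² = 0; i.e., the difference of the two 4-potentials is a null 4-vector at every point of the support of Ψ. -/
set_option maxHeartbeats 1000000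
noncomputable section

open Complex Matrix MeasureTheory

/-- The Dirac matrix γ₁ in the standard representation. -/
def γ1 : Matrix (Fin 4) (Fin 4) ℂ := !![0,0,0,-I; 0,0,-I,0; 0,I,0,0; I,0,0,0]
/-- The Dirac matrix γ₂ in the standard representation. -/
def γ2 : Matrix (Fin 4) (Fin 4) ℂ := !![0,0,0,-1; 0,0,1,0; 0,1,0,0; -1,0,0,0]
/-- The Dirac matrix γ₃ in the standard representation. -/
def γ3 : Matrix (Fin 4) (Fin 4) ℂ := !![0,0,-I,0; 0,0,0,I; I,0,0,0; 0,-I,0,0]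
/-- The Dirac matrix γ₄ in the standard representation. -/
def γ4 : Matrix (Fin 4) (Fin 4) ℂ := !![1,0,0,0; 0,1,0,0; 0,0,-1,0; 0,0,0,-1]
/-- γ₅ = γ₁γ₂γ₃γ₄. -/
def γ5 : Matrix (Fin 4) (Fin 4) ℂ := γ1 * γ2 * γ3 * γ4
/-- δ₁ = γ₁ + γ₅γ₁. -/
def δ1 : Matrix (Fin 4) (Fin 4) ℂ := γ1 + γ5 * γ1
/-- δ₂ = γ₂ + γ₅γ₂. -/
def δ2 : Matrix (Fin 4) (Fin 4) ℂ := γ2 + γ5 * γ2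
/-- δ₃ = γ₃ + γ₅γ₃. -/
def δ3 : Matrix (Fin 4) (Fin 4) ℂ := γ3 + γ5 * γ3
/-- δ₄ = γ₄ + γ₅γ₄. -/
def δ4 : Matrix (Fin 4) (Fin 4) ℂ := γ4 + γ5 * γ4

/-- The sesquilinear form v* M v (v a column vector, v* its conjugate transpose). -/
def qc (M : Matrix (Fin 4) (Fin 4) ℂ) (v : Fin 4 → ℂ) : ℂ := star v ⬝ᵥ M.mulVec v
/-- The bilinear form vᵀ M v (v a column vector, vᵀ its transpose). -/
def qt (M : Matrix (Fin 4) (Fin 4) ℂ) (v : Fin 4 → ℂ) : ℂ := v ⬝ᵥ M.mulVec v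

/-- The partial derivative ∂_μ of a spinor field on ℝ⁴. -/
def pd (μ : Fin 4) (Ψ : (Fin 4 → ℝ) → Fin 4 → ℂ) (x : Fin 4 → ℝ) : Fin 4 → ℂ :=
  fderiv ℝ Ψ x (Pi.single μ 1)

/-- The partial derivative ∂_μ of a complex scalar field on ℝ⁴. -/
def pds (μ : Fin 4) (g : (Fin 4 → ℝ) → ℂ) (x : Fin 4 → ℝ) : ℂ :=
  fderiv ℝ g x (Pi.single μ 1)

/-- The bidirectional derivative ∂_μ↔(Ψ* M Ψ) := Ψ* M (∂_μΨ) − (∂_μΨ)* M Ψ. -/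
def bd (μ : Fin 4) (M : Matrix (Fin 4) (Fin 4) ℂ) (Ψ : (Fin 4 → ℝ) → Fin 4 → ℂ)
    (x : Fin 4 → ℝ) : ℂ :=
  star (Ψ x) ⬝ᵥ M.mulVec (pd μ Ψ x) - star (pd μ Ψ x) ⬝ᵥ M.mulVec (Ψ x)

/-- Ψ is a Dirac solution for the 4-potential (a₀,a₁,a₂,a₃) and mass κ:
Ψ is differentiable and Σ_{μ=1}^{3} γ_μ(∂_μΨ − i a_μΨ) − i γ₄(∂₀Ψ + i a₀Ψ) + κΨ = 0 on ℝ⁴. -/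
def DiracSolution (Ψ : (Fin 4 → ℝ) → Fin 4 → ℂ)
    (a0 a1 a2 a3 : (Fin 4 → ℝ) → ℝ) (κ : ℝ) : Prop :=
  Differentiable ℝ Ψ ∧ ∀ x : Fin 4 → ℝ,
    γ1.mulVec (pd 1 Ψ x - (I * (a1 x : ℂ)) • Ψ x)
      + γ2.mulVec (pd 2 Ψ x - (I * (a2 x : ℂ)) • Ψ x)
      + γ3.mulVec (pd 3 Ψ x - (I * (a3 x : ℂ)) • Ψ x)
      - I • γ4.mulVec (pd 0 Ψ x + (I * (a0 x : ℂ)) • Ψ x)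
      + (κ : ℂ) • Ψ x = 0

lemma I_cubed : Complex.I ^ 3 = -Complex.I := by
  rw [pow_succ, Complex.I_sq]; ring

lemma I_fourth : Complex.I ^ 4 = 1 := by
  rw [pow_succ, I_cubed]; simp [Complex.I_mul_I]

/-- if Ψ is a Dirac solution for two 4-potentials a, b with the same mass κ,
then the difference a − b is a null 4-vector at every point of the support of Ψ. -/
theorem potential_difference_null
    (Ψ : (Fin 4 → ℝ) → Fin 4 → ℂ)
    (a0 a1 a2 a3 b0 b1 b2 b3 : (Fin 4 → ℝ) → ℝ) (κ : ℝ)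
    (hΨa : DiracSolution Ψ a0 a1 a2 a3 κ)
    (hΨb : DiracSolution Ψ b0 b1 b2 b3 κ) :
    ∀ x : Fin 4 → ℝ, Ψ x ≠ 0 →
      (a0 x - b0 x) ^ 2
        - ((a1 x - b1 x) ^ 2 + (a2 x - b2 x) ^ 2 + (a3 x - b3 x) ^ 2) = 0 := by
  intro x hx
  obtain ⟨-, ha⟩ := hΨa
  obtain ⟨-, hb⟩ := hΨb
  have hA0 := congrFun (ha x) 0
  have hA1 := congrFun (ha x) 1
  have hA2 := congrFun (ha x) 2
  have hA3 := congrFun (ha x) 3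
  have hB0 := congrFun (hb x) 0
  have hB1 := congrFun (hb x) 1
  have hB2 := congrFun (hb x) 2
  have hB3 := congrFun (hb x) 3
  simp [γ1, γ2, γ3, γ4, Matrix.mulVec, dotProduct, Fin.sum_univ_four]
    at hA0 hA1 hA2 hA3 hB0 hB1 hB2 hB3
  have k0 : ((((a0 x : ℂ) - b0 x)) ^ 2 - ((((a1 x : ℂ) - b1 x)) ^ 2
      + (((a2 x : ℂ) - b2 x)) ^ 2 + (((a3 x : ℂ) - b3 x)) ^ 2)) * Ψ x 0 = 0 := by
    linear_combination (norm := (ring_nf; simp only [Complex.I_sq, I_cubed, I_fourth]; ring1))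
      ((a0 x : ℂ) - b0 x) * hA0 - ((a0 x : ℂ) - b0 x) * hB0
      - ((a3 x : ℂ) - b3 x) * hA2 + ((a3 x : ℂ) - b3 x) * hB2
      - (((a1 x : ℂ) - b1 x) - I * ((a2 x : ℂ) - b2 x)) * hA3
      + (((a1 x : ℂ) - b1 x) - I * ((a2 x : ℂ) - b2 x)) * hB3
  have k1 : ((((a0 x : ℂ) - b0 x)) ^ 2 - ((((a1 x : ℂ) - b1 x)) ^ 2
      + (((a2 x : ℂ) - b2 x)) ^ 2 + (((a3 x : ℂ) - b3 x)) ^ 2)) * Ψ x 1 = 0 := by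
    linear_combination (norm := (ring_nf; simp only [Complex.I_sq, I_cubed, I_fourth]; ring1))
      ((a0 x : ℂ) - b0 x) * hA1 - ((a0 x : ℂ) - b0 x) * hB1
      + ((a3 x : ℂ) - b3 x) * hA3 - ((a3 x : ℂ) - b3 x) * hB3
      - (((a1 x : ℂ) - b1 x) + I * ((a2 x : ℂ) - b2 x)) * hA2
      + (((a1 x : ℂ) - b1 x) + I * ((a2 x : ℂ) - b2 x)) * hB2
  have k2 : ((((a0 x : ℂ) - b0 x)) ^ 2 - ((((a1 x : ℂ) - b1 x)) ^ 2
      + (((a2 x : ℂ) - b2 x)) ^ 2 + (((a3 x : ℂ) - b3 x)) ^ 2)) * Ψ x 2 = 0 := by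
    linear_combination (norm := (ring_nf; simp only [Complex.I_sq, I_cubed, I_fourth]; ring1))
      -(((a0 x : ℂ) - b0 x)) * hA2 + ((a0 x : ℂ) - b0 x) * hB2
      + ((a3 x : ℂ) - b3 x) * hA0 - ((a3 x : ℂ) - b3 x) * hB0
      + (((a1 x : ℂ) - b1 x) - I * ((a2 x : ℂ) - b2 x)) * hA1
      - (((a1 x : ℂ) - b1 x) - I * ((a2 x : ℂ) - b2 x)) * hB1
  have k3 : ((((a0 x : ℂ) - b0 x)) ^ 2 - ((((a1 x : ℂ) - b1 x)) ^ 2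
      + (((a2 x : ℂ) - b2 x)) ^ 2 + (((a3 x : ℂ) - b3 x)) ^ 2)) * Ψ x 3 = 0 := by
    linear_combination (norm := (ring_nf; simp only [Complex.I_sq, I_cubed, I_fourth]; ring1))
      -(((a0 x : ℂ) - b0 x)) * hA3 + ((a0 x : ℂ) - b0 x) * hB3
      - ((a3 x : ℂ) - b3 x) * hA1 + ((a3 x : ℂ) - b3 x) * hB1
      + (((a1 x : ℂ) - b1 x) + I * ((a2 x : ℂ) - b2 x)) * hA0
      - (((a1 x : ℂ) - b1 x) + I * ((a2 x : ℂ) - b2 x)) * hB0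
  have hzero : (((a0 x : ℂ) - b0 x)) ^ 2 - ((((a1 x : ℂ) - b1 x)) ^ 2
      + (((a2 x : ℂ) - b2 x)) ^ 2 + (((a3 x : ℂ) - b3 x)) ^ 2) = 0 := by
    by_contra hne
    apply hx
    funext i
    fin_cases i
    · simpa [hne] using mul_eq_zero.1 k0
    · simpa [hne] using mul_eq_zero.1 k1
    · simpa [hne] using mul_eq_zero.1 k2
    · simpa [hne] using mul_eq_zero.1 k3
  have hfin : (((a0 x - b0 x) ^ 2
      - ((a1 x - b1 x) ^ 2 + (a2 x - b2 x) ^ 2 + (a3 x - b3 x) ^ 2) : ℝ) : ℂ) = 0 := by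
    push_cast
    linear_combination hzero
  exact_mod_cast hfin
end
end

section
/- Let Ψ : ℝ⁴ → ℂ⁴ be a Dirac solution for the 4-potential a = (a₀,a₁,a₂,a₃) and mass κ. Then at every point of ℝ⁴ the following identity holds: 2a₀·(Ψ*δ₄Ψ) + 2κ·(Ψ*Ψ) = −∂₁(Ψ*δ₁Ψ) − ∂₂(Ψ*δ₂Ψ) − ∂₃(Ψ*δ₃Ψ) + i·∂₀↔(Ψ*δ₄Ψ). -/
noncomputable section

open Complex Matrix MeasureTheory

/-!
Multiply the Dirac equation on the left by `Ψ*(1 + γ₅)` and add the adjoint equation multiplied on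
the right by `(1 - γ₅)Ψ`. Since the `γ_μ` are Hermitian and anticommute with `γ₅`,
`(1 + γ₅)γ_μ = γ_μ(1 - γ₅) = δ_μ`, so the derivative terms pair up into `∂_μ(Ψ*δ_μΨ)` for
`μ = 1, 2, 3` and into `∂₀↔(Ψ*δ₄Ψ)` for the time direction, the spatial potentials cancel because
`i a_μ` is imaginary, and the mass terms add up to `κ Ψ*((1 + γ₅) + (1 - γ₅))Ψ = 2κ Ψ*Ψ`.
-/

section Derivatives

variable {𝕜 E 𝔸 ι : Type*} [NontriviallyNormedField 𝕜] [NormedAddCommGroup E] [NormedSpace 𝕜 E]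
  [NormedCommRing 𝔸] [NormedAlgebra 𝕜 𝔸] [Fintype ι] {f g : E → ι → 𝔸} {x : E}

theorem DifferentiableAt.dotProduct (hf : DifferentiableAt 𝕜 f x) (hg : DifferentiableAt 𝕜 g x) :
    DifferentiableAt 𝕜 (fun y => f y ⬝ᵥ g y) x := by
  unfold _root_.dotProduct
  fun_prop

theorem fderiv_dotProduct_apply (hf : DifferentiableAt 𝕜 f x) (hg : DifferentiableAt 𝕜 g x)
    (v : E) :
    fderiv 𝕜 (fun y => f y ⬝ᵥ g y) x v = fderiv 𝕜 f x v ⬝ᵥ g x + f x ⬝ᵥ fderiv 𝕜 g x v := by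
  have hf' i := differentiableAt_pi.1 hf i
  have hg' i := differentiableAt_pi.1 hg i
  simp only [dotProduct]
  rw [fderiv_fun_sum fun i _ => (hf' i).fun_mul (hg' i)]
  simp [fderiv_fun_mul (hf' _) (hg' _), fderiv_apply hf, fderiv_apply hg, Finset.sum_add_distrib,
    mul_comm, add_comm]

theorem DifferentiableAt.mulVec {κ : Type*} [Fintype κ] (M : Matrix κ ι 𝔸)
    (hg : DifferentiableAt 𝕜 g x) : DifferentiableAt 𝕜 (fun y => M *ᵥ g y) x :=
  differentiableAt_pi.2 fun i => (differentiableAt_const (M i)).dotProduct hg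

theorem fderiv_mulVec_apply {κ : Type*} [Fintype κ] (M : Matrix κ ι 𝔸)
    (hg : DifferentiableAt 𝕜 g x) (v : E) :
    fderiv 𝕜 (fun y => M *ᵥ g y) x v = M *ᵥ fderiv 𝕜 g x v := by
  ext i
  have hcomp := congrArg (· v) (fderiv_apply (hg.mulVec M) i)
  simp only [ContinuousLinearMap.comp_apply, ContinuousLinearMap.proj_apply] at hcomp
  rw [← hcomp]
  exact (fderiv_dotProduct_apply (differentiableAt_const (M i)) hg v).trans (by simp [mulVec])

end Derivatives

theorem fderiv_star_dotProduct_mulVec_apply {E ι : Type*} [NormedAddCommGroup E]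
    [NormedSpace ℝ E] [Fintype ι] (M : Matrix ι ι ℂ) {Ψ : E → ι → ℂ} {x : E}
    (hΨ : DifferentiableAt ℝ Ψ x) (v : E) :
    fderiv ℝ (fun y => star (Ψ y) ⬝ᵥ M *ᵥ Ψ y) x v
      = star (fderiv ℝ Ψ x v) ⬝ᵥ M *ᵥ Ψ x + star (Ψ x) ⬝ᵥ M *ᵥ fderiv ℝ Ψ x v := by
  rw [fderiv_dotProduct_apply hΨ.star (hΨ.mulVec M), fderiv_star, fderiv_mulVec_apply M hΨ]
  rfl

theorem pds_qc (M : Matrix (Fin 4) (Fin 4) ℂ) {Ψ : (Fin 4 → ℝ) → Fin 4 → ℂ} {x : Fin 4 → ℝ}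
    (hΨ : DifferentiableAt ℝ Ψ x) (μ : Fin 4) :
    pds μ (fun y => qc M (Ψ y)) x
      = star (pd μ Ψ x) ⬝ᵥ M *ᵥ Ψ x + star (Ψ x) ⬝ᵥ M *ᵥ pd μ Ψ x :=
  fderiv_star_dotProduct_mulVec_apply M hΨ _

section DiracAlgebra

variable {ι : Type*} [Fintype ι]

theorem current_sub_imaginary_smul (δ : Matrix ι ι ℂ) (u v : ι → ℂ) (a : ℝ) :
    star u ⬝ᵥ δ *ᵥ (v - (I * a) • u) + star (v - (I * a) • u) ⬝ᵥ δ *ᵥ u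
      = star u ⬝ᵥ δ *ᵥ v + star v ⬝ᵥ δ *ᵥ u := by
  simp only [mulVec_sub, mulVec_smul, star_sub, star_smul, dotProduct_sub, sub_dotProduct,
    dotProduct_smul, smul_dotProduct, star_mul', Complex.star_def, Complex.conj_I,
    Complex.conj_ofReal, smul_eq_mul]
  ring

theorem current_I_smul_add_imaginary_smul (δ : Matrix ι ι ℂ) (u v : ι → ℂ) (a : ℝ) :
    star u ⬝ᵥ δ *ᵥ (I • (v + (I * a) • u)) + star (I • (v + (I * a) • u)) ⬝ᵥ δ *ᵥ u
      = I * (star u ⬝ᵥ δ *ᵥ v - star v ⬝ᵥ δ *ᵥ u) - 2 * a * (star u ⬝ᵥ δ *ᵥ u) := by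
  simp only [mulVec_add, mulVec_smul, star_add, star_smul, dotProduct_add, add_dotProduct,
    dotProduct_smul, smul_dotProduct, star_mul', Complex.star_def, Complex.conj_I,
    Complex.conj_ofReal, smul_eq_mul]
  linear_combination (2 * a * (star u ⬝ᵥ δ *ᵥ u)) * Complex.I_sq

variable [DecidableEq ι]

def diracPairing (γ₅ : Matrix ι ι ℂ) (u : ι → ℂ) : (ι → ℂ) →+ ℂ :=
  AddMonoidHom.mk' (fun S => star u ⬝ᵥ (1 + γ₅) *ᵥ S + star S ⬝ᵥ (1 - γ₅) *ᵥ u) fun S T => by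
    simp only [mulVec_add, dotProduct_add, star_add, add_dotProduct]
    ring

variable {γ γ₅ : Matrix ι ι ℂ}

theorem diracPairing_mulVec (hγ : γ.IsHermitian) (hγ₅ : γ * γ₅ = -(γ₅ * γ)) (u w : ι → ℂ) :
    diracPairing γ₅ u (γ *ᵥ w)
      = star u ⬝ᵥ (γ + γ₅ * γ) *ᵥ w + star w ⬝ᵥ (γ + γ₅ * γ) *ᵥ u := by
  have hleft : (1 + γ₅) * γ = γ + γ₅ * γ := by rw [add_mul, one_mul]
  have hright : γᴴ * (1 - γ₅) = γ + γ₅ * γ := by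
    rw [hγ.eq, mul_sub, mul_one, hγ₅, sub_neg_eq_add]
  simp only [diracPairing, AddMonoidHom.mk'_apply, mulVec_mulVec, star_mulVec,
    ← dotProduct_mulVec, hleft, hright]

theorem diracPairing_smul_self (u : ι → ℂ) (κ : ℝ) :
    diracPairing γ₅ u ((κ : ℂ) • u) = 2 * κ * (star u ⬝ᵥ u) := by
  simp only [diracPairing, AddMonoidHom.mk'_apply, mulVec_smul, star_smul, dotProduct_smul,
    smul_dotProduct, add_mulVec, sub_mulVec, one_mulVec, dotProduct_add, dotProduct_sub,
    Complex.star_def, Complex.conj_ofReal, smul_eq_mul]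
  ring

theorem dirac_current_identity {γ₁ γ₂ γ₃ γ₄ : Matrix ι ι ℂ}
    (hγ₁ : γ₁.IsHermitian) (hγ₂ : γ₂.IsHermitian) (hγ₃ : γ₃.IsHermitian) (hγ₄ : γ₄.IsHermitian)
    (hγ₁₅ : γ₁ * γ₅ = -(γ₅ * γ₁)) (hγ₂₅ : γ₂ * γ₅ = -(γ₅ * γ₂))
    (hγ₃₅ : γ₃ * γ₅ = -(γ₅ * γ₃)) (hγ₄₅ : γ₄ * γ₅ = -(γ₅ * γ₄))
    {u v₀ v₁ v₂ v₃ : ι → ℂ} {a₀ a₁ a₂ a₃ κ : ℝ}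
    (h : γ₁ *ᵥ (v₁ - (I * a₁) • u) + γ₂ *ᵥ (v₂ - (I * a₂) • u) + γ₃ *ᵥ (v₃ - (I * a₃) • u)
      - I • γ₄ *ᵥ (v₀ + (I * a₀) • u) + (κ : ℂ) • u = 0) :
    2 * a₀ * (star u ⬝ᵥ (γ₄ + γ₅ * γ₄) *ᵥ u) + 2 * κ * (star u ⬝ᵥ u)
      = -(star v₁ ⬝ᵥ (γ₁ + γ₅ * γ₁) *ᵥ u + star u ⬝ᵥ (γ₁ + γ₅ * γ₁) *ᵥ v₁)
        - (star v₂ ⬝ᵥ (γ₂ + γ₅ * γ₂) *ᵥ u + star u ⬝ᵥ (γ₂ + γ₅ * γ₂) *ᵥ v₂)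
        - (star v₃ ⬝ᵥ (γ₃ + γ₅ * γ₃) *ᵥ u + star u ⬝ᵥ (γ₃ + γ₅ * γ₃) *ᵥ v₃)
        + I * (star u ⬝ᵥ (γ₄ + γ₅ * γ₄) *ᵥ v₀ - star v₀ ⬝ᵥ (γ₄ + γ₅ * γ₄) *ᵥ u) := by
  have hpair := congrArg (diracPairing γ₅ u) h
  rw [← mulVec_smul, map_add, map_sub, map_add, map_add, map_zero,
    diracPairing_mulVec hγ₁ hγ₁₅, diracPairing_mulVec hγ₂ hγ₂₅, diracPairing_mulVec hγ₃ hγ₃₅,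
    diracPairing_mulVec hγ₄ hγ₄₅, diracPairing_smul_self, current_sub_imaginary_smul,
    current_sub_imaginary_smul, current_sub_imaginary_smul,
    current_I_smul_add_imaginary_smul] at hpair
  linear_combination hpair

end DiracAlgebra

theorem γ5_eq : γ5 = !![0, 0, -1, 0; 0, 0, 0, -1; -1, 0, 0, 0; 0, -1, 0, 0] := by
  ext i j
  fin_cases i <;> fin_cases j <;> simp [γ5, γ1, γ2, γ3, γ4, mul_apply, Fin.sum_univ_four]

theorem isHermitian_γ1 : γ1.IsHermitian := by
  ext i j; fin_cases i <;> fin_cases j <;> simp [γ1, conjTranspose_apply]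

theorem isHermitian_γ2 : γ2.IsHermitian := by
  ext i j; fin_cases i <;> fin_cases j <;> simp [γ2, conjTranspose_apply]

theorem isHermitian_γ3 : γ3.IsHermitian := by
  ext i j; fin_cases i <;> fin_cases j <;> simp [γ3, conjTranspose_apply]

theorem isHermitian_γ4 : γ4.IsHermitian := by
  ext i j; fin_cases i <;> fin_cases j <;> simp [γ4, conjTranspose_apply]

theorem γ1_mul_γ5 : γ1 * γ5 = -(γ5 * γ1) := by
  rw [γ5_eq]; ext i j; fin_cases i <;> fin_cases j <;> simp [γ1, mul_apply, Fin.sum_univ_four]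

theorem γ2_mul_γ5 : γ2 * γ5 = -(γ5 * γ2) := by
  rw [γ5_eq]; ext i j; fin_cases i <;> fin_cases j <;> simp [γ2, mul_apply, Fin.sum_univ_four]

theorem γ3_mul_γ5 : γ3 * γ5 = -(γ5 * γ3) := by
  rw [γ5_eq]; ext i j; fin_cases i <;> fin_cases j <;> simp [γ3, mul_apply, Fin.sum_univ_four]

theorem γ4_mul_γ5 : γ4 * γ5 = -(γ5 * γ4) := by
  rw [γ5_eq]; ext i j; fin_cases i <;> fin_cases j <;> simp [γ4, mul_apply, Fin.sum_univ_four]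

/-- for a Dirac solution Ψ,
2a₀·(Ψ*δ₄Ψ) + 2κ·(Ψ*Ψ) = −∂₁(Ψ*δ₁Ψ) − ∂₂(Ψ*δ₂Ψ) − ∂₃(Ψ*δ₃Ψ) + i·∂₀↔(Ψ*δ₄Ψ) everywhere. -/
theorem identity_a0
    (Ψ : (Fin 4 → ℝ) → Fin 4 → ℂ)
    (a0 a1 a2 a3 : (Fin 4 → ℝ) → ℝ) (κ : ℝ)
    (hΨ : DiracSolution Ψ a0 a1 a2 a3 κ) :
    ∀ x : Fin 4 → ℝ,
      2 * (a0 x : ℂ) * qc δ4 (Ψ x) + 2 * (κ : ℂ) * (star (Ψ x) ⬝ᵥ Ψ x)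
        = -pds 1 (fun y => qc δ1 (Ψ y)) x
            - pds 2 (fun y => qc δ2 (Ψ y)) x
            - pds 3 (fun y => qc δ3 (Ψ y)) x
            + I * bd 0 δ4 Ψ x := by
  intro x
  obtain ⟨hdiff, hdirac⟩ := hΨ
  rw [pds_qc δ1 (hdiff x), pds_qc δ2 (hdiff x), pds_qc δ3 (hdiff x), bd]
  exact dirac_current_identity isHermitian_γ1 isHermitian_γ2 isHermitian_γ3 isHermitian_γ4
    γ1_mul_γ5 γ2_mul_γ5 γ3_mul_γ5 γ4_mul_γ5 (hdirac x)
end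
end

section
/- For every vector v ∈ ℂ⁴ the following equivalence holds: the three conditions (vᵀγ₂v)·conj(vᵀγ₁γ₂γ₄v) + (vᵀγ₁γ₂γ₄v)·conj(vᵀγ₂v) = 0, (vᵀγ₂v)·conj(vᵀγ₄v) + (vᵀγ₄v)·conj(vᵀγ₂v) = 0, and (vᵀγ₂v)·conj(vᵀγ₂γ₃γ₄v) + (vᵀγ₂γ₃γ₄v)·conj(vᵀγ₂v) = 0 hold simultaneously if and only if (vᵀγ₂v)·(v*δ₄v) = 0. -/
noncomputable section

open Complex Matrix MeasureTheory

section
open Complex in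
private lemma aux_sum_sq (A B1 B2 B3 T : ℂ)
    (key : (A * (starRingEnd ℂ) B1 + B1 * (starRingEnd ℂ) A) ^ 2
        + (A * (starRingEnd ℂ) B2 + B2 * (starRingEnd ℂ) A) ^ 2
        + (A * (starRingEnd ℂ) B3 + B3 * (starRingEnd ℂ) A) ^ 2
        = 4 * (A * T) * (starRingEnd ℂ) (A * T)) :
    (A * (starRingEnd ℂ) B1 + B1 * (starRingEnd ℂ) A = 0
      ∧ A * (starRingEnd ℂ) B2 + B2 * (starRingEnd ℂ) A = 0
      ∧ A * (starRingEnd ℂ) B3 + B3 * (starRingEnd ℂ) A = 0)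
    ↔ A * T = 0 := by
  have r : ∀ B : ℂ, A * (starRingEnd ℂ) B + B * (starRingEnd ℂ) A
      = ((2 * (A * (starRingEnd ℂ) B).re : ℝ) : ℂ) := by
    intro B
    have h : B * (starRingEnd ℂ) A = (starRingEnd ℂ) (A * (starRingEnd ℂ) B) := by
      rw [_root_.map_mul, Complex.conj_conj]; ring
    rw [h, Complex.add_conj]
  constructor
  · rintro ⟨h1, h2, h3⟩
    rw [h1, h2, h3] at key
    have h5 : ((Complex.normSq (A * T) : ℝ) : ℂ) = 0 := by
      rw [← Complex.mul_conj]; linear_combination (-1/4 : ℂ) * key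
    have h6 : Complex.normSq (A * T) = 0 := by exact_mod_cast h5
    exact Complex.normSq_eq_zero.mp h6
  · intro h
    rw [r B1, r B2, r B3] at key ⊢
    rw [h] at key
    simp only [mul_zero, zero_mul, map_zero] at key
    have key' : (2 * (A * (starRingEnd ℂ) B1).re) ^ 2
        + (2 * (A * (starRingEnd ℂ) B2).re) ^ 2
        + (2 * (A * (starRingEnd ℂ) B3).re) ^ 2 = 0 := by exact_mod_cast key
    refine ⟨?_, ?_, ?_⟩ <;>
      · norm_cast
        nlinarith [sq_nonneg (2 * (A * (starRingEnd ℂ) B1).re),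
          sq_nonneg (2 * (A * (starRingEnd ℂ) B2).re),
          sq_nonneg (2 * (A * (starRingEnd ℂ) B3).re)]
end


set_option maxHeartbeats 1600000 in
/-- for every v ∈ ℂ⁴, the three "real part" conditions on the bilinear forms
hold simultaneously iff (vᵀγ₂v)·(v*δ₄v) = 0. -/
theorem bilinear_conditions_iff
    (v : Fin 4 → ℂ) :
    (qt γ2 v * (starRingEnd ℂ) (qt (γ1 * γ2 * γ4) v)
        + qt (γ1 * γ2 * γ4) v * (starRingEnd ℂ) (qt γ2 v) = 0
      ∧ qt γ2 v * (starRingEnd ℂ) (qt γ4 v)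
        + qt γ4 v * (starRingEnd ℂ) (qt γ2 v) = 0
      ∧ qt γ2 v * (starRingEnd ℂ) (qt (γ2 * γ3 * γ4) v)
        + qt (γ2 * γ3 * γ4) v * (starRingEnd ℂ) (qt γ2 v) = 0)
    ↔ qt γ2 v * qc δ4 v = 0 := by

  have ea : qt γ2 v = 2 * (v 1 * v 2) - 2 * (v 0 * v 3) := by
    simp [qt, γ2, mulVec, dotProduct, Fin.sum_univ_four, Matrix.vecHead, Matrix.vecTail,
      Function.comp]
    ring
  have eb1 : qt (γ1 * γ2 * γ4) v = I * (v 0 ^ 2 - v 1 ^ 2 - v 2 ^ 2 + v 3 ^ 2) := by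
    simp [qt, γ1, γ2, γ4, mulVec, dotProduct, Fin.sum_univ_four, Matrix.mul_apply,
      Matrix.vecHead, Matrix.vecTail, Function.comp]
    ring
  have eb2 : qt γ4 v = v 0 ^ 2 + v 1 ^ 2 - v 2 ^ 2 - v 3 ^ 2 := by
    simp [qt, γ4, mulVec, dotProduct, Fin.sum_univ_four, Matrix.vecHead, Matrix.vecTail,
      Function.comp]
    ring
  have eb3 : qt (γ2 * γ3 * γ4) v = I * (2 * (v 0 * v 1) - 2 * (v 2 * v 3)) := by
    simp [qt, γ2, γ3, γ4, mulVec, dotProduct, Fin.sum_univ_four, Matrix.mul_apply,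
      Matrix.vecHead, Matrix.vecTail, Function.comp]
    ring
  have eT : qc δ4 v = (starRingEnd ℂ) (v 0) * (v 0 + v 2) + (starRingEnd ℂ) (v 1) * (v 1 + v 3)
      - (starRingEnd ℂ) (v 2) * (v 0 + v 2) - (starRingEnd ℂ) (v 3) * (v 1 + v 3) := by
    simp [qc, δ4, γ5, γ1, γ2, γ3, γ4, mulVec, dotProduct, Fin.sum_univ_four, Matrix.mul_apply,
      Matrix.vecHead, Matrix.vecTail, Function.comp, Complex.star_def]
    ring
  refine aux_sum_sq _ _ _ _ _ ?_
  rw [ea, eb1, eb2, eb3, eT]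
  simp only [map_add, map_sub, _root_.map_mul, map_pow, map_ofNat, Complex.conj_I,
    Complex.conj_conj]
  set c0 := (starRingEnd ℂ) (v 0) with hc0
  set c1 := (starRingEnd ℂ) (v 1) with hc1
  set c2 := (starRingEnd ℂ) (v 2) with hc2
  set c3 := (starRingEnd ℂ) (v 3) with hc3
  linear_combination
    (((v 0 ^ 2 - v 1 ^ 2 - v 2 ^ 2 + v 3 ^ 2) * (2 * (c1 * c2) - 2 * (c0 * c3))
        - (2 * (v 1 * v 2) - 2 * (v 0 * v 3)) * (c0 ^ 2 - c1 ^ 2 - c2 ^ 2 + c3 ^ 2)) ^ 2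
      + ((2 * (v 0 * v 1) - 2 * (v 2 * v 3)) * (2 * (c1 * c2) - 2 * (c0 * c3))
        - (2 * (v 1 * v 2) - 2 * (v 0 * v 3)) * (2 * (c0 * c1) - 2 * (c2 * c3))) ^ 2)
      * Complex.I_sq
end
end

section
/- For every vector v = (v₁,v₂,v₃,v₄) ∈ ℂ⁴ the following equivalence holds: vᵀγ₂v = 0 and v*δ₄v = 0 if and only if either (v₃ = v₁ and v₄ = v₂) or (v₃ = −v₁ and v₄ = −v₂). -/
noncomputable section

open Complex Matrix MeasureTheory

lemma qt_gamma2_eq (v : Fin 4 → ℂ) : qt γ2 v = 2 * (v 1 * v 2 - v 0 * v 3) := by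
  simp only [qt, dotProduct, Fin.sum_univ_four]
  simp [γ2, Matrix.mulVec, dotProduct, Fin.sum_univ_four, Matrix.vecHead,
    Matrix.vecTail, show (Fin.succ 2 : Fin 4) = 3 from rfl,
    show (Fin.succ 0 : Fin 4) = 1 from rfl, show (Fin.succ 1 : Fin 4) = 2 from rfl]
  ring

lemma delta4_eq : δ4 = !![1,0,1,0;0,1,0,1;-1,0,-1,0;0,-1,0,-1] := by
  ext i j
  fin_cases i <;> fin_cases j <;>
    simp [δ4, γ5, γ1, γ2, γ3, γ4, Matrix.mul_apply, Fin.sum_univ_four] <;> rfl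

lemma qc_delta4_eq (v : Fin 4 → ℂ) : qc δ4 v =
    (starRingEnd ℂ (v 0) - starRingEnd ℂ (v 2)) * (v 0 + v 2)
      + (starRingEnd ℂ (v 1) - starRingEnd ℂ (v 3)) * (v 1 + v 3) := by
  simp only [qc, dotProduct, Fin.sum_univ_four]
  simp [delta4_eq, Matrix.mulVec, dotProduct, Fin.sum_univ_four, Matrix.vecHead,
    Matrix.vecTail, show (Fin.succ 2 : Fin 4) = 3 from rfl,
    show (Fin.succ 0 : Fin 4) = 1 from rfl, show (Fin.succ 1 : Fin 4) = 2 from rfl]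
  ring

/-- for every v = (v₁,v₂,v₃,v₄) ∈ ℂ⁴, vᵀγ₂v = 0 and v*δ₄v = 0 iff
either (v₃ = v₁ and v₄ = v₂) or (v₃ = −v₁ and v₄ = −v₂). -/
theorem gamma2_delta4_vanish_iff
    (v : Fin 4 → ℂ) :
    (qt γ2 v = 0 ∧ qc δ4 v = 0)
    ↔ ((v 2 = v 0 ∧ v 3 = v 1) ∨ (v 2 = -v 0 ∧ v 3 = -v 1)) := by
  rw [qt_gamma2_eq, qc_delta4_eq]
  constructor
  · rintro ⟨hA, hB⟩
    set a := v 0; set b := v 1; set c := v 2; set d := v 3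
    set P := a + c with hP; set Q := b + d with hQ
    set R := a - c with hR; set S := b - d with hS
    have hA' : P * S - Q * R = 0 := by rw [hP, hQ, hR, hS]; linear_combination hA
    have hB' : starRingEnd ℂ R * P + starRingEnd ℂ S * Q = 0 := by
      rw [hP, hQ, hR, hS]; simp only [map_sub]; linear_combination hB
    have hBc : R * starRingEnd ℂ P + S * starRingEnd ℂ Q = 0 := by
      have := congrArg (starRingEnd ℂ) hB'
      simpa [map_add, _root_.map_mul, Complex.conj_conj, mul_comm] using this
    have k1 : R * S * (starRingEnd ℂ P * P + starRingEnd ℂ Q * Q) = 0 := by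
      linear_combination (R * starRingEnd ℂ P) * hA' + (Q * R) * hBc
    have left_of : R = 0 → S = 0 → (c = a ∧ d = b) := by
      intro h1 h2
      constructor
      · have : a - c = 0 := h1; linear_combination -this
      · have : b - d = 0 := h2; linear_combination -this
    have right_of : P = 0 → Q = 0 → (c = -a ∧ d = -b) := by
      intro h1 h2
      constructor
      · have : a + c = 0 := h1; linear_combination this
      · have : b + d = 0 := h2; linear_combination this
    have pq_zero : starRingEnd ℂ P * P + starRingEnd ℂ Q * Q = 0 → P = 0 ∧ Q = 0 := by
      intro h
      have h' : (Complex.normSq P : ℂ) + (Complex.normSq Q : ℂ) = 0 := by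
        rw [Complex.normSq_eq_conj_mul_self, Complex.normSq_eq_conj_mul_self]
        linear_combination h
      have h'' : Complex.normSq P + Complex.normSq Q = 0 := by
        exact_mod_cast h'
      have hP0 : Complex.normSq P = 0 :=
        le_antisymm (by nlinarith [Complex.normSq_nonneg Q]) (Complex.normSq_nonneg P)
      have hQ0 : Complex.normSq Q = 0 := by nlinarith [Complex.normSq_nonneg P]
      exact ⟨Complex.normSq_eq_zero.mp hP0, Complex.normSq_eq_zero.mp hQ0⟩
    rcases mul_eq_zero.mp k1 with hRS | hPQ
    · rcases mul_eq_zero.mp hRS with h1 | h1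
      · -- R = 0
        have : P * S = 0 := by rw [h1] at hA'; linear_combination hA'
        rcases mul_eq_zero.mp this with h2 | h2
        · -- P = 0 ; from hB' : conj S * Q = 0
          have h3 : starRingEnd ℂ S * Q = 0 := by
            rw [h1, h2] at hB'; simpa using hB'
          rcases mul_eq_zero.mp h3 with h4 | h4
          · exact Or.inl (left_of h1 (by simpa using congrArg (starRingEnd ℂ) h4))
          · exact Or.inr (right_of h2 h4)
        · exact Or.inl (left_of h1 h2)
      · -- S = 0
        have : Q * R = 0 := by rw [h1] at hA'; linear_combination -hA'
        rcases mul_eq_zero.mp this with h2 | h2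
        · -- Q = 0 ; from hB' : conj R * P = 0
          have h3 : starRingEnd ℂ R * P = 0 := by
            rw [h1, h2] at hB'; simpa using hB'
          rcases mul_eq_zero.mp h3 with h4 | h4
          · exact Or.inl (left_of (by simpa using congrArg (starRingEnd ℂ) h4) h1)
          · exact Or.inr (right_of h4 h2)
        · exact Or.inl (left_of h2 h1)
    · rcases pq_zero hPQ with ⟨h1, h2⟩
      exact Or.inr (right_of h1 h2)
  · rintro (⟨h2, h3⟩ | ⟨h2, h3⟩) <;> rw [h2, h3] <;>
      (try simp only [map_neg]) <;> constructor <;> ring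
end
end

section
/- Let v ∈ ℂ⁴ satisfy v*δ₄v = 0 and vᵀγ₂v ≠ 0. Then the three complex numbers Θ₁ := −i·(vᵀγ₅γ₃v)/(vᵀγ₂v), Θ₂ := −i·(vᵀγ₄v)/(vᵀγ₂v), and Θ₃ := i·(vᵀγ₅γ₁v)/(vᵀγ₂v) are all real. -/
noncomputable section

open Complex Matrix MeasureTheory

private lemma im_div_zero (N D : ℂ) (hD : D ≠ 0)
    (h : N * (starRingEnd ℂ) D = (starRingEnd ℂ) N * D) : (N / D).im = 0 := by
  apply Complex.conj_eq_iff_im.mp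
  rw [map_div₀, div_eq_div_iff (by simpa using hD) hD]
  exact h.symm

/-- if v*δ₄v = 0 and vᵀγ₂v ≠ 0, then
Θ₁ = −i(vᵀγ₅γ₃v)/(vᵀγ₂v), Θ₂ = −i(vᵀγ₄v)/(vᵀγ₂v), Θ₃ = i(vᵀγ₅γ₁v)/(vᵀγ₂v)
are all real. -/
theorem theta_real
    (v : Fin 4 → ℂ) (hδ4 : qc δ4 v = 0) (hγ2 : qt γ2 v ≠ 0) :
    (-I * qt (γ5 * γ3) v / qt γ2 v).im = 0
      ∧ (-I * qt γ4 v / qt γ2 v).im = 0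
      ∧ (I * qt (γ5 * γ1) v / qt γ2 v).im = 0 := by

  have e2 : qt γ2 v = 2*(v 1 * v 2 - v 0 * v 3) := by
    simp [qt, γ2, dotProduct, mulVec, Fin.sum_univ_four, Matrix.vecHead, Matrix.vecTail]; ring
  have e53 : -I * qt (γ5*γ3) v = -(v 0^2 - v 1^2 - v 2^2 + v 3^2) := by
    have : qt (γ5*γ3) v = -I*(v 0^2 - v 1^2 - v 2^2 + v 3^2) := by
      simp [qt, γ5, γ3, γ1, γ2, γ4, dotProduct, mulVec, Fin.sum_univ_four, Matrix.mul_apply,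
        Matrix.vecHead, Matrix.vecTail]; ring
    rw [this]; linear_combination (v 0^2 - v 1^2 - v 2^2 + v 3^2) * Complex.I_sq
  have e4 : qt γ4 v = v 0^2 + v 1^2 - v 2^2 - v 3^2 := by
    simp [qt, γ4, dotProduct, mulVec, Fin.sum_univ_four, Matrix.vecHead, Matrix.vecTail]; ring
  have e51 : I * qt (γ5*γ1) v = 2*(v 0 * v 1 - v 2 * v 3) := by
    have : qt (γ5*γ1) v = -2*I*(v 0 * v 1 - v 2 * v 3) := by
      simp [qt, γ5, γ3, γ1, γ2, γ4, dotProduct, mulVec, Fin.sum_univ_four, Matrix.mul_apply,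
        Matrix.vecHead, Matrix.vecTail]; ring
    rw [this]; linear_combination (-2*(v 0 * v 1 - v 2 * v 3)) * Complex.I_sq
  set a := v 0; set b := v 1; set c := v 2; set d := v 3
  set A := (starRingEnd ℂ) a with hA
  set B := (starRingEnd ℂ) b with hB
  set C := (starRingEnd ℂ) c with hC
  set E := (starRingEnd ℂ) d with hE
  have hd : (A - C) * (a + c) + (B - E) * (b + d) = 0 := by
    rw [← hδ4, hA, hB, hC, hE]
    simp [qc, δ4, γ5, γ3, γ1, γ2, γ4, dotProduct, mulVec, Fin.sum_univ_four, Matrix.mul_apply,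
      Matrix.vecHead, Matrix.vecTail]
    ring
  have hdbar : (a - c) * (A + C) + (b - d) * (B + E) = 0 := by
    have h2 := congrArg (starRingEnd ℂ) hd
    simp only [map_add, _root_.map_mul, map_sub, map_zero, hA, hB, hC, hE,
      Complex.conj_conj] at h2
    linear_combination h2
  refine ⟨?_, ?_, ?_⟩
  · apply im_div_zero _ _ hγ2
    rw [e2, e53]
    simp only [_root_.map_mul, map_neg, map_sub, map_add, map_pow, Complex.conj_I, map_ofNat,
      ← hA, ← hB, ← hC, ← hE]
    linear_combination ((A+C)*(b-d)+(B+E)*(a-c)) * hd - ((a+c)*(B-E)+(b+d)*(A-C)) * hdbar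
  · apply im_div_zero _ _ hγ2
    rw [e2, e4]
    simp only [_root_.map_mul, map_neg, map_sub, map_add, map_pow, Complex.conj_I, map_ofNat,
      ← hA, ← hB, ← hC, ← hE]
    linear_combination (-I*((A+C)*(b-d)-(B+E)*(a-c))) * hd + (-I*((a+c)*(B-E)-(b+d)*(A-C))) * hdbar
  · apply im_div_zero _ _ hγ2
    rw [e2, e51]
    simp only [_root_.map_mul, map_neg, map_sub, map_add, map_pow, Complex.conj_I, map_ofNat,
      ← hA, ← hB, ← hC, ← hE]
    linear_combination (-2*(B+E)*(b-d)) * hd + (2*(B-E)*(b+d)) * hdbar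
end
end

section
/- (Degenerate solutions correspond to infinitely many 4-potentials.) Let Ψ : ℝ⁴ → ℂ⁴ be a Dirac solution for the 4-potential a = (a₀,a₁,a₂,a₃) and mass κ, and suppose (Ψ*δ₄Ψ)(x) = 0 for every x ∈ ℝ⁴. Define, at each point x with (Ψᵀγ₂Ψ)(x) ≠ 0, Θ₁ := −i·(Ψᵀγ₅γ₃Ψ)/(Ψᵀγ₂Ψ), Θ₂ := −i·(Ψᵀγ₄Ψ)/(Ψᵀγ₂Ψ), Θ₃ := i·(Ψᵀγ₅γ₁Ψ)/(Ψᵀγ₂Ψ). Then for every function f : ℝ⁴ → ℝ and every point x with (Ψᵀγ₂Ψ)(x) ≠ 0, the Dirac equation with the modified 4-potential holds at x: Σ_{μ=1}^{3} γ_μ(∂_μΨ − i(a_μ + fΘ_μ)Ψ) − iγ₄(∂₀Ψ + i(a₀ + f)Ψ) + κΨ = 0 at x. -/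
noncomputable section

open Complex Matrix MeasureTheory

lemma h12γ : γ1 * γ2 = !![I,0,0,0; 0,-I,0,0; 0,0,I,0; 0,0,0,-I] := by
  ext i j
  fin_cases i <;> fin_cases j <;>
    simp [γ1, γ2, Matrix.mul_apply, Fin.sum_univ_four, Matrix.vecHead, Matrix.vecTail]

lemma h123γ : γ1 * γ2 * γ3 = !![0,0,1,0; 0,0,0,1; -1,0,0,0; 0,-1,0,0] := by
  rw [h12γ]
  ext i j
  fin_cases i <;> fin_cases j <;>
    simp [γ3, Matrix.mul_apply, Fin.sum_univ_four, Matrix.vecHead, Matrix.vecTail]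

lemma hγ5ex : γ5 = !![0,0,-1,0; 0,0,0,-1; -1,0,0,0; 0,-1,0,0] := by
  show γ1 * γ2 * γ3 * γ4 = _
  rw [h123γ]
  ext i j
  fin_cases i <;> fin_cases j <;>
    simp [γ4, Matrix.mul_apply, Fin.sum_univ_four, Matrix.vecHead, Matrix.vecTail]

lemma hγ53ex : γ5 * γ3 = !![-I,0,0,0; 0,I,0,0; 0,0,I,0; 0,0,0,-I] := by
  rw [hγ5ex]
  ext i j
  fin_cases i <;> fin_cases j <;>
    simp [γ3, Matrix.mul_apply, Fin.sum_univ_four, Matrix.vecHead, Matrix.vecTail]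

lemma hγ51ex : γ5 * γ1 = !![0,-I,0,0; -I,0,0,0; 0,0,0,I; 0,0,I,0] := by
  rw [hγ5ex]
  ext i j
  fin_cases i <;> fin_cases j <;>
    simp [γ1, Matrix.mul_apply, Fin.sum_univ_four, Matrix.vecHead, Matrix.vecTail]

lemma key_identity (v : Fin 4 → ℂ) :
    (-(qt (γ5 * γ3) v)) • γ1.mulVec v + (-(qt γ4 v)) • γ2.mulVec v
      + (qt (γ5 * γ1) v) • γ3.mulVec v + (qt γ2 v) • γ4.mulVec v = 0 := by
  rw [hγ53ex, hγ51ex]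
  funext i
  fin_cases i <;>
    simp [qt, γ1, γ2, γ3, γ4, Matrix.mulVec, dotProduct, Fin.sum_univ_four,
      Matrix.vecHead, Matrix.vecTail] <;> ring_nf <;> simp [Complex.I_sq] <;> ring

/-- Degenerate solutions correspond to infinitely many 4-potentials:
if Ψ is a Dirac solution for (a₀,a₁,a₂,a₃) and mass κ with Ψ*δ₄Ψ ≡ 0, then for every
real function f and every point x with (Ψᵀγ₂Ψ)(x) ≠ 0, the Dirac equation with the
modified 4-potential (a₀ + f, a₁ + fΘ₁, a₂ + fΘ₂, a₃ + fΘ₃) holds at x, where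
Θ₁ = −i(Ψᵀγ₅γ₃Ψ)/(Ψᵀγ₂Ψ), Θ₂ = −i(Ψᵀγ₄Ψ)/(Ψᵀγ₂Ψ), Θ₃ = i(Ψᵀγ₅γ₁Ψ)/(Ψᵀγ₂Ψ). -/
theorem degenerate_infinitely_many_potentials
    (Ψ : (Fin 4 → ℝ) → Fin 4 → ℂ)
    (a0 a1 a2 a3 : (Fin 4 → ℝ) → ℝ) (κ : ℝ)
    (hΨ : DiracSolution Ψ a0 a1 a2 a3 κ)
    (hδ4 : ∀ x, qc δ4 (Ψ x) = 0) :
    ∀ (f : (Fin 4 → ℝ) → ℝ) (x : Fin 4 → ℝ), qt γ2 (Ψ x) ≠ 0 →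
      γ1.mulVec (pd 1 Ψ x
          - (I * ((a1 x : ℂ) + (f x : ℂ) * (-I * qt (γ5 * γ3) (Ψ x) / qt γ2 (Ψ x)))) • Ψ x)
        + γ2.mulVec (pd 2 Ψ x
          - (I * ((a2 x : ℂ) + (f x : ℂ) * (-I * qt γ4 (Ψ x) / qt γ2 (Ψ x)))) • Ψ x)
        + γ3.mulVec (pd 3 Ψ x
          - (I * ((a3 x : ℂ) + (f x : ℂ) * (I * qt (γ5 * γ1) (Ψ x) / qt γ2 (Ψ x)))) • Ψ x)
        - I • γ4.mulVec (pd 0 Ψ x + (I * ((a0 x : ℂ) + (f x : ℂ))) • Ψ x)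
        + (κ : ℂ) • Ψ x = 0 := by
  intro f x hq
  have h := hΨ.2 x
  have k := key_identity (Ψ x)
  have expand :
      γ1.mulVec (pd 1 Ψ x
          - (I * ((a1 x : ℂ) + (f x : ℂ) * (-I * qt (γ5 * γ3) (Ψ x) / qt γ2 (Ψ x)))) • Ψ x)
        + γ2.mulVec (pd 2 Ψ x
          - (I * ((a2 x : ℂ) + (f x : ℂ) * (-I * qt γ4 (Ψ x) / qt γ2 (Ψ x)))) • Ψ x)
        + γ3.mulVec (pd 3 Ψ x
          - (I * ((a3 x : ℂ) + (f x : ℂ) * (I * qt (γ5 * γ1) (Ψ x) / qt γ2 (Ψ x)))) • Ψ x)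
        - I • γ4.mulVec (pd 0 Ψ x + (I * ((a0 x : ℂ) + (f x : ℂ))) • Ψ x)
        + (κ : ℂ) • Ψ x
      = (γ1.mulVec (pd 1 Ψ x - (I * (a1 x : ℂ)) • Ψ x)
          + γ2.mulVec (pd 2 Ψ x - (I * (a2 x : ℂ)) • Ψ x)
          + γ3.mulVec (pd 3 Ψ x - (I * (a3 x : ℂ)) • Ψ x)
          - I • γ4.mulVec (pd 0 Ψ x + (I * (a0 x : ℂ)) • Ψ x)
          + (κ : ℂ) • Ψ x)
        + ((f x : ℂ) / qt γ2 (Ψ x)) •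
          ((-(qt (γ5 * γ3) (Ψ x))) • γ1.mulVec (Ψ x) + (-(qt γ4 (Ψ x))) • γ2.mulVec (Ψ x)
            + (qt (γ5 * γ1) (Ψ x)) • γ3.mulVec (Ψ x) + (qt γ2 (Ψ x)) • γ4.mulVec (Ψ x)) := by
    simp only [Matrix.mulVec_sub, Matrix.mulVec_add, Matrix.mulVec_smul, smul_add, smul_sub,
      smul_smul]
    match_scalars <;> (try field_simp; try ring_nf; try simp [Complex.I_sq]; try ring)
  rw [expand, h, k]
  simp
end
end

section
/- (Non-degenerate solutions determine the 4-potential uniquely.) Let Ψ : ℝ⁴ → ℂ⁴ be a Dirac solution for the 4-potential a = (a₀,a₁,a₂,a₃) and mass κ, and also a Dirac solution for the 4-potential b = (b₀,b₁,b₂,b₃) and the same mass κ. Then at every point x ∈ ℝ⁴ with (Ψ*δ₄Ψ)(x) ≠ 0 one has a_μ(x) = b_μ(x) for μ = 0,1,2,3. -/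
noncomputable section

open Complex Matrix MeasureTheory

lemma dirac_key (c0 c1 c2 c3 : ℝ) (p q r s : ℂ)
    (E0 : (c0:ℂ) * p - c3 * r - (c1 - I*c2) * s = 0)
    (E1 : (c0:ℂ) * q - (c1 + I*c2) * r + c3 * s = 0)
    (E2 : (c0:ℂ) * r - c3 * p - (c1 - I*c2) * q = 0)
    (E3 : (c0:ℂ) * s - (c1 + I*c2) * p + c3 * q = 0)
    (hQ : (starRingEnd ℂ) p * (p + r) + (starRingEnd ℂ) q * (q + s)
        - (starRingEnd ℂ) r * (p + r) - (starRingEnd ℂ) s * (q + s) ≠ 0) :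
    c0 = 0 ∧ c1 = 0 ∧ c2 = 0 ∧ c3 = 0 := by
  have G0 := congrArg (starRingEnd ℂ) E0
  have G1 := congrArg (starRingEnd ℂ) E1
  have G2 := congrArg (starRingEnd ℂ) E2
  have G3 := congrArg (starRingEnd ℂ) E3
  simp only [map_sub, map_add, _root_.map_mul, Complex.conj_ofReal, Complex.conj_I, map_zero] at G0 G1 G2 G3
  have hc0 : (c0:ℂ) = 0 := by
    rcases mul_eq_zero.mp (show (c0:ℂ) * ((starRingEnd ℂ) p * (p + r) + (starRingEnd ℂ) q * (q + s)
        - (starRingEnd ℂ) r * (p + r) - (starRingEnd ℂ) s * (q + s)) = 0 from by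
      linear_combination (starRingEnd ℂ) p * E0 + (starRingEnd ℂ) q * E1 - r * G2 - s * G3
        + (1/2 : ℂ) * ((starRingEnd ℂ) p * E2 + (starRingEnd ℂ) q * E3
          - (starRingEnd ℂ) r * E0 - (starRingEnd ℂ) s * E1
          + r * G0 + s * G1 - p * G2 - q * G3)) with h | h
    · exact h
    · exact absurd h hQ
  have hK : ((c1:ℂ)^2 + (c2:ℂ)^2 + (c3:ℂ)^2) = 0 := by
    by_contra hK
    have hp : p = 0 := by
      rcases mul_eq_zero.mp (show ((c1:ℂ)^2 + (c2:ℂ)^2 + (c3:ℂ)^2) * p = 0 from by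
        linear_combination (-(c3:ℂ)) * E2 - ((c1:ℂ) - I*c2) * E3
          + ((c3:ℂ)*r + ((c1:ℂ) - I*c2)*s) * hc0 + ((c2:ℂ)^2 * p) * Complex.I_sq) with h | h
      · exact absurd h hK
      · exact h
    have hq : q = 0 := by
      rcases mul_eq_zero.mp (show ((c1:ℂ)^2 + (c2:ℂ)^2 + (c3:ℂ)^2) * q = 0 from by
        linear_combination (-((c1:ℂ) + I*c2)) * E2 + (c3:ℂ) * E3
          + (((c1:ℂ) + I*c2)*r - (c3:ℂ)*s) * hc0 + ((c2:ℂ)^2 * q) * Complex.I_sq) with h | h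
      · exact absurd h hK
      · exact h
    have hr : r = 0 := by
      rcases mul_eq_zero.mp (show ((c1:ℂ)^2 + (c2:ℂ)^2 + (c3:ℂ)^2) * r = 0 from by
        linear_combination (-(c3:ℂ)) * E0 - ((c1:ℂ) - I*c2) * E1
          + ((c3:ℂ)*p + ((c1:ℂ) - I*c2)*q) * hc0 + ((c2:ℂ)^2 * r) * Complex.I_sq) with h | h
      · exact absurd h hK
      · exact h
    have hs : s = 0 := by
      rcases mul_eq_zero.mp (show ((c1:ℂ)^2 + (c2:ℂ)^2 + (c3:ℂ)^2) * s = 0 from by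
        linear_combination (-((c1:ℂ) + I*c2)) * E0 + (c3:ℂ) * E1
          + (((c1:ℂ) + I*c2)*p - (c3:ℂ)*q) * hc0 + ((c2:ℂ)^2 * s) * Complex.I_sq) with h | h
      · exact absurd h hK
      · exact h
    exact hQ (by rw [hp, hq, hr, hs]; simp)
  have hc0' : c0 = 0 := by exact_mod_cast hc0
  have hK' : c1^2 + c2^2 + c3^2 = 0 := by exact_mod_cast hK
  exact ⟨hc0', by nlinarith [sq_nonneg c1, sq_nonneg c2, sq_nonneg c3],
    by nlinarith [sq_nonneg c1, sq_nonneg c2, sq_nonneg c3],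
    by nlinarith [sq_nonneg c1, sq_nonneg c2, sq_nonneg c3]⟩

/-- Non-degenerate solutions determine the 4-potential uniquely:
if Ψ is a Dirac solution for both a and b with the same mass κ, then a = b at every
point where Ψ*δ₄Ψ ≠ 0. -/
theorem nondegenerate_potential_unique
    (Ψ : (Fin 4 → ℝ) → Fin 4 → ℂ)
    (a0 a1 a2 a3 b0 b1 b2 b3 : (Fin 4 → ℝ) → ℝ) (κ : ℝ)
    (hΨa : DiracSolution Ψ a0 a1 a2 a3 κ)
    (hΨb : DiracSolution Ψ b0 b1 b2 b3 κ) :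
    ∀ x : Fin 4 → ℝ, qc δ4 (Ψ x) ≠ 0 →
      a0 x = b0 x ∧ a1 x = b1 x ∧ a2 x = b2 x ∧ a3 x = b3 x := by
  intro x hQ
  obtain ⟨-, ha⟩ := hΨa
  obtain ⟨-, hb⟩ := hΨb
  have ha0 := congrFun (ha x) 0
  have ha1 := congrFun (ha x) 1
  have ha2 := congrFun (ha x) 2
  have ha3 := congrFun (ha x) 3
  have hb0 := congrFun (hb x) 0
  have hb1 := congrFun (hb x) 1
  have hb2 := congrFun (hb x) 2
  have hb3 := congrFun (hb x) 3
  simp [γ1, γ2, γ3, γ4, Matrix.mulVec, dotProduct, Fin.sum_univ_four]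
    at ha0 ha1 ha2 ha3 hb0 hb1 hb2 hb3
  have hδ : δ4 = !![1,0,1,0; 0,1,0,1; -1,0,-1,0; 0,-1,0,-1] := by
    show γ4 + γ1*γ2*γ3*γ4*γ4 = _
    norm_num [γ1, γ2, γ3, γ4, Matrix.mul_apply, Fin.sum_univ_four, ← Matrix.ext_iff,
      Fin.forall_fin_succ]
  have hQ' : (starRingEnd ℂ) (Ψ x 0) * (Ψ x 0 + Ψ x 2) + (starRingEnd ℂ) (Ψ x 1) * (Ψ x 1 + Ψ x 3)
      - (starRingEnd ℂ) (Ψ x 2) * (Ψ x 0 + Ψ x 2) - (starRingEnd ℂ) (Ψ x 3) * (Ψ x 1 + Ψ x 3) ≠ 0 := by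
    intro h
    apply hQ
    rw [qc, hδ]
    simp [Matrix.mulVec, dotProduct, Fin.sum_univ_four, Complex.star_def]
    linear_combination h
  obtain ⟨h0, h1, h2, h3⟩ := dirac_key (a0 x - b0 x) (a1 x - b1 x) (a2 x - b2 x) (a3 x - b3 x)
    (Ψ x 0) (Ψ x 1) (Ψ x 2) (Ψ x 3)
    (by push_cast; linear_combination ha0 - hb0 + (((a0 x:ℂ)-b0 x)*Ψ x 0 - ((a3 x:ℂ)-b3 x)*Ψ x 2 - ((a1 x:ℂ)-b1 x)*Ψ x 3) * Complex.I_sq)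
    (by push_cast; linear_combination ha1 - hb1 + (((a0 x:ℂ)-b0 x)*Ψ x 1 - ((a1 x:ℂ)-b1 x)*Ψ x 2 + ((a3 x:ℂ)-b3 x)*Ψ x 3) * Complex.I_sq)
    (by push_cast; linear_combination hb2 - ha2 + (((a0 x:ℂ)-b0 x)*Ψ x 2 - ((a3 x:ℂ)-b3 x)*Ψ x 0 - ((a1 x:ℂ)-b1 x)*Ψ x 1) * Complex.I_sq)
    (by push_cast; linear_combination hb3 - ha3 + (((a0 x:ℂ)-b0 x)*Ψ x 3 - ((a1 x:ℂ)-b1 x)*Ψ x 0 + ((a3 x:ℂ)-b3 x)*Ψ x 1) * Complex.I_sq)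
    hQ'
  exact ⟨sub_eq_zero.mp h0, sub_eq_zero.mp h1, sub_eq_zero.mp h2, sub_eq_zero.mp h3⟩
end
end

section
/- (Existence of degenerate Dirac solutions.) Let κ, α, φ₁, φ₂ ∈ ℝ with cos α ≠ 0 and cos φ₂ ≠ 0. Define p₀ := −κ·tan φ₂, p₁ := iκ·(1 + e^{2iφ₂}sin²α − e^{2iφ₁}cos²α)/(2e^{iφ₁}·cos α·cos φ₂), p₂ := κ·(1 + e^{2iφ₁}cos²α + e^{2iφ₂}sin²α)/(2e^{iφ₁}·cos α·cos φ₂), p₃ := iκ·e^{iφ₂}·sin α/cos φ₂, and let Ψ : ℝ⁴ → ℂ⁴ be given by Ψ(x) = e^{p₁x₁ + p₂x₂ + p₃x₃ + p₀x₀}·(e^{i(φ₁−φ₂)}cos α, sin α, 0, 1)ᵀ. Then Ψ is nowhere zero, Ψ satisfies the force-free Dirac equation Σ_{μ=1}^{3} γ_μ∂_μΨ − iγ₄∂₀Ψ + κΨ = 0 on ℝ⁴ (i.e. Ψ is a Dirac solution for the zero 4-potential and mass κ), and (Ψ*δ₄Ψ)(x) = 0 for every x ∈ ℝ⁴. -/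
noncomputable section

open Complex Matrix MeasureTheory

set_option maxHeartbeats 1000000

/-- Existence of degenerate Dirac solutions: the explicit plane-wave spinor
Ψ(x) = e^{p₁x₁+p₂x₂+p₃x₃+p₀x₀}·(e^{i(φ₁−φ₂)}cos α, sin α, 0, 1)ᵀ is nowhere zero, solves
the force-free Dirac equation with mass κ, and satisfies Ψ*δ₄Ψ ≡ 0. -/
theorem degenerate_solution_exists
    (κ α φ₁ φ₂ : ℝ) (hα : Real.cos α ≠ 0) (hφ₂ : Real.cos φ₂ ≠ 0)
    (p0 p1 p2 p3 : ℂ) (Ψ : (Fin 4 → ℝ) → Fin 4 → ℂ)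
    (hp0 : p0 = -((κ : ℂ) * (Real.tan φ₂ : ℂ)))
    (hp1 : p1 = I * (κ : ℂ)
        * (1 + Complex.exp (2 * I * (φ₂ : ℂ)) * (Real.sin α : ℂ) ^ 2
             - Complex.exp (2 * I * (φ₁ : ℂ)) * (Real.cos α : ℂ) ^ 2)
        / (2 * Complex.exp (I * (φ₁ : ℂ)) * (Real.cos α : ℂ) * (Real.cos φ₂ : ℂ)))
    (hp2 : p2 = (κ : ℂ)
        * (1 + Complex.exp (2 * I * (φ₁ : ℂ)) * (Real.cos α : ℂ) ^ 2
             + Complex.exp (2 * I * (φ₂ : ℂ)) * (Real.sin α : ℂ) ^ 2)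
        / (2 * Complex.exp (I * (φ₁ : ℂ)) * (Real.cos α : ℂ) * (Real.cos φ₂ : ℂ)))
    (hp3 : p3 = I * (κ : ℂ) * Complex.exp (I * (φ₂ : ℂ)) * (Real.sin α : ℂ)
        / (Real.cos φ₂ : ℂ))
    (hΨ : ∀ x : Fin 4 → ℝ, Ψ x
        = Complex.exp (p1 * (x 1 : ℂ) + p2 * (x 2 : ℂ) + p3 * (x 3 : ℂ) + p0 * (x 0 : ℂ))
          • ![Complex.exp (I * ((φ₁ : ℂ) - (φ₂ : ℂ))) * (Real.cos α : ℂ),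
              (Real.sin α : ℂ), 0, 1]) :
    (∀ x, Ψ x ≠ 0)
      ∧ DiracSolution Ψ (fun _ => 0) (fun _ => 0) (fun _ => 0) (fun _ => 0) κ
      ∧ ∀ x, qc δ4 (Ψ x) = 0 := by
  -- abbreviations
  set C : ℂ := ((Real.cos α : ℝ) : ℂ) with hCdef
  set S : ℂ := ((Real.sin α : ℝ) : ℂ) with hSdef
  set C2 : ℂ := ((Real.cos φ₂ : ℝ) : ℂ) with hC2def
  set S2 : ℂ := ((Real.sin φ₂ : ℝ) : ℂ) with hS2def
  set E1 : ℂ := Complex.exp (I * (φ₁ : ℂ)) with hE1def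
  set E2 : ℂ := Complex.exp (I * (φ₂ : ℂ)) with hE2def
  set A : ℂ := Complex.exp (I * ((φ₁ : ℂ) - (φ₂ : ℂ))) * C with hAdef
  have hCne : C ≠ 0 := Complex.ofReal_ne_zero.mpr hα
  have hC2ne : C2 ≠ 0 := Complex.ofReal_ne_zero.mpr hφ₂
  have hE1ne : E1 ≠ 0 := Complex.exp_ne_zero _
  have hE2ne : E2 ≠ 0 := Complex.exp_ne_zero _
  have hDne : (2 : ℂ) * E1 * C * C2 ≠ 0 := by
    apply mul_ne_zero (mul_ne_zero (mul_ne_zero two_ne_zero hE1ne) hCne) hC2ne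
  have hEE1 : Complex.exp (2 * I * (φ₁ : ℂ)) = E1 ^ 2 := by
    rw [hE1def, sq, ← Complex.exp_add]; congr 1; ring
  have hEE2 : Complex.exp (2 * I * (φ₂ : ℂ)) = E2 ^ 2 := by
    rw [hE2def, sq, ← Complex.exp_add]; congr 1; ring
  have hE2exp : E2 = C2 + S2 * I := by
    rw [hE2def, hC2def, hS2def, mul_comm I, Complex.exp_mul_I, Complex.ofReal_cos,
      Complex.ofReal_sin]
  have hRa : A * E2 = E1 * C := by
    rw [hAdef, hE2def, hE1def, mul_right_comm, ← Complex.exp_add]; congr 2; ring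
  have hI2 : I ^ 2 = -1 := Complex.I_sq
  have hP1 : S ^ 2 + C ^ 2 = 1 := by
    rw [hSdef, hCdef]; norm_cast; exact Real.sin_sq_add_cos_sq α
  have hP2 : S2 ^ 2 + C2 ^ 2 = 1 := by
    rw [hS2def, hC2def]; norm_cast; exact Real.sin_sq_add_cos_sq φ₂
  have htan : ((Real.tan φ₂ : ℝ) : ℂ) * C2 = S2 := by
    rw [hC2def, hS2def]; norm_cast; exact Real.tan_mul_cos hφ₂
  -- denominator-cleared forms
  have hq0 : p0 * C2 = -((κ : ℂ) * S2) := by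
    rw [hp0, neg_mul, mul_assoc, htan]
  have hq1 : p1 * (2 * E1 * C * C2)
      = I * (κ : ℂ) * (1 + E2 ^ 2 * S ^ 2 - E1 ^ 2 * C ^ 2) := by
    rw [hp1, hEE1, hEE2]; exact div_mul_cancel₀ _ hDne
  have hq2 : p2 * (2 * E1 * C * C2)
      = (κ : ℂ) * (1 + E1 ^ 2 * C ^ 2 + E2 ^ 2 * S ^ 2) := by
    rw [hp2, hEE1, hEE2]; exact div_mul_cancel₀ _ hDne
  have hq3 : p3 * C2 = I * (κ : ℂ) * E2 * S := by
    rw [hp3]; exact div_mul_cancel₀ _ hC2ne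
  -- the four scalar component identities
  have h0 : -I * p1 - p2 - I * p0 * A + (κ : ℂ) * A = 0 := by
    have h0' : (-I * p1 - p2 - I * p0 * A + (κ : ℂ) * A) * (2 * E1 * C * C2 * E2) = 0 := by
      linear_combination (-I * E2) * hq1 + (-E2) * hq2 + (-2 * I * A * E1 * C * E2) * hq0
        + (2 * I * (κ : ℂ) * S2 * E1 * C + 2 * (κ : ℂ) * E1 * C * C2) * hRa
        + (-(κ : ℂ) * (1 + E2 ^ 2 * S ^ 2 - E1 ^ 2 * C ^ 2) * E2) * hI2
        + (-2 * (κ : ℂ) * E1 ^ 2 * C ^ 2) * hE2exp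
    exact (mul_eq_zero.mp h0').resolve_right
      (mul_ne_zero hDne hE2ne)
  have h1 : I * p3 - I * p0 * S + (κ : ℂ) * S = 0 := by
    have h1' : (I * p3 - I * p0 * S + (κ : ℂ) * S) * C2 = 0 := by
      linear_combination I * hq3 - I * S * hq0 + (κ : ℂ) * E2 * S * hI2 - (κ : ℂ) * S * hE2exp
    exact (mul_eq_zero.mp h1').resolve_right hC2ne
  have h2 : S * (I * p1 + p2) + I * p3 * A = 0 := by
    have h2' : (S * (I * p1 + p2) + I * p3 * A) * (2 * E1 * C * C2 * E2) = 0 := by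
      linear_combination (I * S * E2) * hq1 + (S * E2) * hq2 + (2 * I * A * E1 * C * E2) * hq3
        + (2 * I ^ 2 * (κ : ℂ) * S * E1 * C * E2) * hRa
        + ((κ : ℂ) * S * E2 * (1 + E2 ^ 2 * S ^ 2 - E1 ^ 2 * C ^ 2)
            + 2 * (κ : ℂ) * S * E1 ^ 2 * C ^ 2 * E2) * hI2
    exact (mul_eq_zero.mp h2').resolve_right (mul_ne_zero hDne hE2ne)
  have h3 : A * (I * p1 - p2) - I * p3 * S + I * p0 + (κ : ℂ) = 0 := by
    have h3' : (A * (I * p1 - p2) - I * p3 * S + I * p0 + (κ : ℂ))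
        * (2 * E1 * C * C2 * E2) = 0 := by
      linear_combination (I * A * E2) * hq1 + (-A * E2) * hq2 + (-2 * I * S * E1 * C * E2) * hq3
        + (2 * I * E1 * C * E2) * hq0
        + (-2 * (κ : ℂ) * (1 + E2 ^ 2 * S ^ 2)) * hRa
        + ((κ : ℂ) * A * E2 * (1 + E2 ^ 2 * S ^ 2 - E1 ^ 2 * C ^ 2)
            - 2 * (κ : ℂ) * S ^ 2 * E1 * C * E2 ^ 2 - 2 * (κ : ℂ) * E1 * C * S2 ^ 2) * hI2
        + (2 * (κ : ℂ) * E1 * C * (C2 - I * S2)) * hE2exp + (2 * (κ : ℂ) * E1 * C) * hP2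
    exact (mul_eq_zero.mp h3').resolve_right (mul_ne_zero hDne hE2ne)
  clear_value C S C2 S2 E1 E2 A
  -- the constant spinor and the vector identity
  have hvec : p1 • γ1.mulVec ![A, S, 0, 1] + p2 • γ2.mulVec ![A, S, 0, 1]
      + p3 • γ3.mulVec ![A, S, 0, 1] - (I * p0) • γ4.mulVec ![A, S, 0, 1]
      + (κ : ℂ) • ![A, S, 0, 1] = 0 := by
    funext i
    fin_cases i <;>
      simp [γ1, γ2, γ3, γ4, Matrix.mulVec, dotProduct, Fin.sum_univ_four]
    · linear_combination h0
    · linear_combination h1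
    · linear_combination h2
    · linear_combination h3
  -- substitute the explicit form of Ψ
  have hΨfun : Ψ = fun x : Fin 4 → ℝ =>
      Complex.exp (p1 * (x 1 : ℂ) + p2 * (x 2 : ℂ) + p3 * (x 3 : ℂ) + p0 * (x 0 : ℂ))
        • ![A, S, 0, 1] := funext hΨ
  subst hΨfun
  -- derivative structure
  set L : (Fin 4 → ℝ) →L[ℝ] ℂ :=
    p1 • (Complex.ofRealCLM.comp (ContinuousLinearMap.proj 1))
      + p2 • (Complex.ofRealCLM.comp (ContinuousLinearMap.proj 2))
      + p3 • (Complex.ofRealCLM.comp (ContinuousLinearMap.proj 3))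
      + p0 • (Complex.ofRealCLM.comp (ContinuousLinearMap.proj 0)) with hLdef
  have hlin : ∀ x : Fin 4 → ℝ, HasFDerivAt
      (fun y : Fin 4 → ℝ => p1 * (y 1 : ℂ) + p2 * (y 2 : ℂ) + p3 * (y 3 : ℂ) + p0 * (y 0 : ℂ))
      L x := by
    intro x
    have h1' := ((Complex.ofRealCLM.comp (ContinuousLinearMap.proj (R := ℝ)
      (φ := fun _ : Fin 4 => ℝ) 1)).hasFDerivAt (x := x)).const_mul p1
    have h2' := ((Complex.ofRealCLM.comp (ContinuousLinearMap.proj (R := ℝ)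
      (φ := fun _ : Fin 4 => ℝ) 2)).hasFDerivAt (x := x)).const_mul p2
    have h3' := ((Complex.ofRealCLM.comp (ContinuousLinearMap.proj (R := ℝ)
      (φ := fun _ : Fin 4 => ℝ) 3)).hasFDerivAt (x := x)).const_mul p3
    have h0' := ((Complex.ofRealCLM.comp (ContinuousLinearMap.proj (R := ℝ)
      (φ := fun _ : Fin 4 => ℝ) 0)).hasFDerivAt (x := x)).const_mul p0
    exact ((h1'.add h2').add h3').add h0'
  have hF : ∀ x : Fin 4 → ℝ, HasFDerivAt
      (fun y : Fin 4 → ℝ =>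
        Complex.exp (p1 * (y 1 : ℂ) + p2 * (y 2 : ℂ) + p3 * (y 3 : ℂ) + p0 * (y 0 : ℂ))
          • ![A, S, 0, 1])
      ((Complex.exp (p1 * (x 1 : ℂ) + p2 * (x 2 : ℂ) + p3 * (x 3 : ℂ) + p0 * (x 0 : ℂ)) • L).smulRight
        ![A, S, 0, 1]) x := by
    intro x
    exact ((Complex.hasDerivAt_exp _).comp_hasFDerivAt x (hlin x)).smul_const _
  have hpd : ∀ (μ : Fin 4) (x : Fin 4 → ℝ),
      pd μ (fun y : Fin 4 → ℝ =>
        Complex.exp (p1 * (y 1 : ℂ) + p2 * (y 2 : ℂ) + p3 * (y 3 : ℂ) + p0 * (y 0 : ℂ))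
          • ![A, S, 0, 1]) x
      = (Complex.exp (p1 * (x 1 : ℂ) + p2 * (x 2 : ℂ) + p3 * (x 3 : ℂ) + p0 * (x 0 : ℂ))
          * L (Pi.single μ 1)) • ![A, S, 0, 1] := by
    intro μ x
    rw [pd, (hF x).fderiv, ContinuousLinearMap.smulRight_apply,
      ContinuousLinearMap.smul_apply, smul_eq_mul]
  have hL1 : L (Pi.single 1 1) = p1 := by
    rw [hLdef]; simp [Pi.single_apply]
  have hL2 : L (Pi.single 2 1) = p2 := by
    rw [hLdef]; simp [Pi.single_apply]
  have hL3 : L (Pi.single 3 1) = p3 := by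
    rw [hLdef]; simp [Pi.single_apply]
  have hL0 : L (Pi.single 0 1) = p0 := by
    rw [hLdef]; simp [Pi.single_apply]
  refine ⟨?_, ⟨fun x => (hF x).differentiableAt, ?_⟩, ?_⟩
  · -- nowhere zero
    intro x h
    exact Complex.exp_ne_zero
      (p1 * (x 1 : ℂ) + p2 * (x 2 : ℂ) + p3 * (x 3 : ℂ) + p0 * (x 0 : ℂ))
      (by simpa using congrFun h 3)
  · -- the Dirac equation
    intro x
    simp only [Complex.ofReal_zero, mul_zero, zero_smul, sub_zero, add_zero]
    rw [hpd 1 x, hpd 2 x, hpd 3 x, hpd 0 x, hL1, hL2, hL3, hL0]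
    set e : ℂ := Complex.exp (p1 * (x 1 : ℂ) + p2 * (x 2 : ℂ) + p3 * (x 3 : ℂ) + p0 * (x 0 : ℂ))
      with hedef
    rw [Matrix.mulVec_smul, Matrix.mulVec_smul, Matrix.mulVec_smul, Matrix.mulVec_smul]
    have : (e * p1) • γ1.mulVec ![A, S, 0, 1] + (e * p2) • γ2.mulVec ![A, S, 0, 1]
        + (e * p3) • γ3.mulVec ![A, S, 0, 1] - I • (e * p0) • γ4.mulVec ![A, S, 0, 1]
        + (κ : ℂ) • e • ![A, S, 0, 1]
        = e • (p1 • γ1.mulVec ![A, S, 0, 1] + p2 • γ2.mulVec ![A, S, 0, 1]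
            + p3 • γ3.mulVec ![A, S, 0, 1] - (I * p0) • γ4.mulVec ![A, S, 0, 1]
            + (κ : ℂ) • ![A, S, 0, 1]) := by
      module
    rw [this, hvec, smul_zero]
  · -- the degeneracy condition
    intro x
    have hδ4 : δ4 = !![1,0,1,0; 0,1,0,1; -1,0,-1,0; 0,-1,0,-1] := by
      show γ4 + γ1 * γ2 * γ3 * γ4 * γ4 = _
      rw [γ1, γ2, γ3, γ4]
      ext i j
      fin_cases i <;> fin_cases j <;>
        simp [Matrix.mul_apply, Fin.sum_univ_four, Matrix.vecHead, Matrix.vecTail]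
    have hSconj : (starRingEnd ℂ) S = S := by rw [hSdef]; exact Complex.conj_ofReal _
    have hAc : (starRingEnd ℂ) A = Complex.exp (-(I * ((φ₁ : ℂ) - (φ₂ : ℂ)))) * C := by
      rw [hAdef, hCdef, _root_.map_mul, Complex.conj_ofReal, ← Complex.exp_conj]
      congr 2
      simp [_root_.map_mul, _root_.map_sub, Complex.conj_ofReal, Complex.conj_I]
    have hAA : (starRingEnd ℂ) A * A = C ^ 2 := by
      rw [hAc, hAdef, mul_mul_mul_comm, ← Complex.exp_add, neg_add_cancel,
        Complex.exp_zero, one_mul, sq]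
    have hqcv : star ![A, S, 0, 1] ⬝ᵥ δ4.mulVec ![A, S, 0, 1] = 0 := by
      rw [hδ4]
      simp [Matrix.mulVec, dotProduct, Fin.sum_univ_four, Pi.star_apply,
        RCLike.star_def]
      linear_combination hAA + hP1 + (S + 1) * hSconj
    rw [qc, star_smul, Matrix.mulVec_smul, smul_dotProduct, dotProduct_smul,
      hqcv]
    simp
end
end
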